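/- arXiv:1804.01181 — 2 statements merged into one kernel-verified Lean document; each statement's English description precedes it below -/
import Mathlib

section
/- Let o_i, o_j, p, q be points of the Euclidean plane (EuclideanSpace ℝ (Fin 2)), and let r_i, r_j be positive reals with ‖p − o_i‖ = r_i. Assume o_i ≠ o_j, ⟪q − p, p − o_i⟫ = 0, and q − o_j = −(r_j/r_i)·(p − o_i) (inner tangent configuration). Then the sine of the angle ∠(o_j, o_i, p) (the Euclidean angle at vertex o_i between the rays toward o_j and toward p) equals ‖q − p‖ / ‖o_j − o_i‖. -/
open scoped RealInnerProductSpace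

/-- Equation (3) of the paper: for an inner tangent configuration,
sin(δ_p) = ‖q − p‖ / ‖o_j − o_i‖, where δ_p is the angle at o_i between the
rays toward o_j and toward p. -/
theorem sin_angle_inner_tangent (o_i o_j p q : EuclideanSpace ℝ (Fin 2)) (r_i r_j : ℝ)
    (hri : 0 < r_i) (hrj : 0 < r_j) (hp : ‖p - o_i‖ = r_i) (hij : o_i ≠ o_j)
    (htan : ⟪q - p, p - o_i⟫ = 0)
    (hq : q - o_j = -(r_j / r_i) • (p - o_i)) :
    Real.sin (EuclideanGeometry.angle o_j o_i p) = ‖q - p‖ / ‖o_j - o_i‖ := by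
  set u : EuclideanSpace ℝ (Fin 2) := p - o_i with hu
  set w : EuclideanSpace ℝ (Fin 2) := q - p with hw
  set c : ℝ := 1 + r_j / r_i with hc
  have hcpos : 0 < c := by positivity
  have hv : o_j - o_i = c • u + w := by
    have h2 : o_j - o_i = (u + w) - (q - o_j) := by rw [hu, hw]; abel
    rw [h2, hq, hc]; module
  have hwu : ⟪w, u⟫ = 0 := htan
  have huw : ⟪u, w⟫ = 0 := by rw [real_inner_comm]; exact hwu
  have hun : ‖u‖ = r_i := hp
  have hunz : ‖u‖ ≠ 0 := by rw [hun]; exact hri.ne'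
  have hvinner : ⟪o_j - o_i, u⟫ = c * ‖u‖ ^ 2 := by
    rw [hv, inner_add_left, real_inner_smul_left, hwu, real_inner_self_eq_norm_sq]
    ring
  have hvnorm : ‖o_j - o_i‖ ^ 2 = c ^ 2 * ‖u‖ ^ 2 + ‖w‖ ^ 2 := by
    rw [hv, ← real_inner_self_eq_norm_sq]
    simp only [inner_add_left, inner_add_right, real_inner_smul_left,
      real_inner_smul_right, hwu, huw, real_inner_self_eq_norm_sq]
    rw [norm_smul, Real.norm_eq_abs, abs_of_pos (by positivity)]
    ring
  have hvnz : ‖o_j - o_i‖ ≠ 0 := by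
    simp [sub_eq_zero, hij.symm]
  have key := InnerProductGeometry.sin_angle_mul_norm_mul_norm (o_j - o_i) u
  rw [real_inner_self_eq_norm_sq, real_inner_self_eq_norm_sq, hvinner] at key
  have hsqrt : √(‖o_j - o_i‖ ^ 2 * ‖u‖ ^ 2 - c * ‖u‖ ^ 2 * (c * ‖u‖ ^ 2))
      = ‖w‖ * ‖u‖ := by
    have : ‖o_j - o_i‖ ^ 2 * ‖u‖ ^ 2 - c * ‖u‖ ^ 2 * (c * ‖u‖ ^ 2)
        = (‖w‖ * ‖u‖) ^ 2 := by rw [hvnorm]; ring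
    rw [this, Real.sqrt_sq (by positivity)]
  rw [hsqrt] at key
  have hangle : EuclideanGeometry.angle o_j o_i p
      = InnerProductGeometry.angle (o_j - o_i) u := rfl
  rw [hangle]
  field_simp
  nlinarith [key, norm_nonneg w, norm_nonneg u]
end

section
/- Fix β : ℕ and let (f₁, g₁, h₁) and (f₂, g₂, h₂) be departure-curve triples with associated functions F₁ and F₂. If the elimination polynomial P of the two triples is not the zero polynomial, then the set {t : ℝ | F₁ t = F₂ t} is finite and has at most 16β + 8 elements. -/
open Polynomial

/-- A departure-curve triple: polynomials (f, g, h) with deg f ≤ 2β+1,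
deg g ≤ 2β, deg h ≤ 4β+2, g everywhere positive and h everywhere
nonnegative. -/
structure DepartureTriple (β : ℕ) where
  f : Polynomial ℝ
  g : Polynomial ℝ
  h : Polynomial ℝ
  hf : f.natDegree ≤ 2 * β + 1
  hg : g.natDegree ≤ 2 * β
  hh : h.natDegree ≤ 4 * β + 2
  g_pos : ∀ t : ℝ, 0 < g.eval t
  h_nonneg : ∀ t : ℝ, 0 ≤ h.eval t

/-- The function F(t) = (f(t) + √h(t))/g(t) associated with a
departure-curve triple. -/
noncomputable def DepartureTriple.assoc {β : ℕ} (T : DepartureTriple β) : ℝ → ℝ :=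
  fun t => (T.f.eval t + Real.sqrt (T.h.eval t)) / T.g.eval t

/-- The elimination polynomial of two departure-curve triples. -/
noncomputable def eliminationPoly {β : ℕ} (T₁ T₂ : DepartureTriple β) : Polynomial ℝ :=
  ((T₁.f * T₂.g - T₂.f * T₁.g) ^ 2 - T₁.g ^ 2 * T₂.h - T₂.g ^ 2 * T₁.h) ^ 2
    - 4 * T₁.g ^ 2 * T₂.g ^ 2 * T₁.h * T₂.h

lemma root_of_eq {β : ℕ} (T₁ T₂ : DepartureTriple β) {t : ℝ}
    (ht : T₁.assoc t = T₂.assoc t) : (eliminationPoly T₁ T₂).eval t = 0 := by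
  have g1 := T₁.g_pos t
  have g2 := T₂.g_pos t
  have h1 := T₁.h_nonneg t
  have h2 := T₂.h_nonneg t
  unfold DepartureTriple.assoc at ht
  rw [div_eq_div_iff g1.ne' g2.ne'] at ht
  have key : (T₁.f.eval t * T₂.g.eval t - T₂.f.eval t * T₁.g.eval t)
      = T₁.g.eval t * Real.sqrt (T₂.h.eval t) - T₂.g.eval t * Real.sqrt (T₁.h.eval t) := by
    nlinarith [ht]
  have sq1 : Real.sqrt (T₁.h.eval t) ^ 2 = T₁.h.eval t := Real.sq_sqrt h1
  have sq2 : Real.sqrt (T₂.h.eval t) ^ 2 = T₂.h.eval t := Real.sq_sqrt h2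
  have key2 : ((T₁.f.eval t * T₂.g.eval t - T₂.f.eval t * T₁.g.eval t)^2
      - T₁.g.eval t ^2 * T₂.h.eval t - T₂.g.eval t ^2 * T₁.h.eval t)
      = -2 * T₁.g.eval t * T₂.g.eval t * (Real.sqrt (T₁.h.eval t) * Real.sqrt (T₂.h.eval t)) := by
    rw [key]; nlinarith [sq1, sq2]
  simp only [eliminationPoly, eval_sub, eval_mul, eval_pow, eval_ofNat]
  rw [key2]
  have : (-2 * T₁.g.eval t * T₂.g.eval t * (Real.sqrt (T₁.h.eval t) * Real.sqrt (T₂.h.eval t))) ^ 2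
      = 4 * T₁.g.eval t ^ 2 * T₂.g.eval t ^ 2 * T₁.h.eval t * T₂.h.eval t := by
    rw [show (-2 * T₁.g.eval t * T₂.g.eval t * (Real.sqrt (T₁.h.eval t) * Real.sqrt (T₂.h.eval t))) ^ 2
        = 4 * T₁.g.eval t ^ 2 * T₂.g.eval t ^ 2 * (Real.sqrt (T₁.h.eval t) ^ 2 * Real.sqrt (T₂.h.eval t) ^ 2) from by ring,
      sq1, sq2]; ring
  linarith

lemma elim_natDegree {β : ℕ} (T₁ T₂ : DepartureTriple β) :
    (eliminationPoly T₁ T₂).natDegree ≤ 16 * β + 8 := by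
  have hA : ((T₁.f * T₂.g - T₂.f * T₁.g) ^ 2 - T₁.g ^ 2 * T₂.h - T₂.g ^ 2 * T₁.h).natDegree
      ≤ 8 * β + 2 := by
    apply le_trans (natDegree_sub_le _ _)
    apply max_le
    · apply le_trans (natDegree_sub_le _ _)
      apply max_le
      · apply le_trans (natDegree_pow_le)
        calc 2 * (T₁.f * T₂.g - T₂.f * T₁.g).natDegree
            ≤ 2 * (4 * β + 1) := by
              gcongr
              apply le_trans (natDegree_sub_le _ _)
              apply max_le <;>
              · apply le_trans (natDegree_mul_le)
                have := T₁.hf; have := T₂.hf; have := T₁.hg; have := T₂.hg; omega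
          _ ≤ 8 * β + 2 := by omega
      · apply le_trans (natDegree_mul_le)
        have : (T₁.g ^ 2).natDegree ≤ 4 * β := by
          apply le_trans natDegree_pow_le; have := T₁.hg; omega
        have := T₂.hh; omega
    · apply le_trans (natDegree_mul_le)
      have : (T₂.g ^ 2).natDegree ≤ 4 * β := by
        apply le_trans natDegree_pow_le; have := T₂.hg; omega
      have := T₁.hh; omega
  unfold eliminationPoly
  apply le_trans (natDegree_sub_le _ _)
  apply max_le
  · apply le_trans natDegree_pow_le; omega
  · apply le_trans (natDegree_mul_le)
    have h1 : (4 * T₁.g ^ 2 * T₂.g ^ 2 * T₁.h).natDegree ≤ 12 * β + 2 := by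
      apply le_trans (natDegree_mul_le)
      have h2 : (4 * T₁.g ^ 2 * T₂.g ^ 2 : Polynomial ℝ).natDegree ≤ 8 * β := by
        apply le_trans (natDegree_mul_le)
        have h3 : (4 * T₁.g ^ 2 : Polynomial ℝ).natDegree ≤ 4 * β := by
          apply le_trans (natDegree_mul_le)
          have : (4 : Polynomial ℝ).natDegree = 0 := natDegree_ofNat 4
          have := natDegree_pow_le (p := T₁.g) (n := 2); have := T₁.hg; omega
        have := natDegree_pow_le (p := T₂.g) (n := 2); have := T₂.hg; omega
      have := T₁.hh; omega
    have := T₂.hh; omega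

/-- Two departure curves intersect at most 16β + 8 times, provided their
elimination polynomial is not identically zero (Section 3 of the paper). -/
theorem departure_curves_intersections_finite (β : ℕ) (T₁ T₂ : DepartureTriple β)
    (hP : eliminationPoly T₁ T₂ ≠ 0) :
    {t : ℝ | T₁.assoc t = T₂.assoc t}.Finite ∧
      {t : ℝ | T₁.assoc t = T₂.assoc t}.ncard ≤ 16 * β + 8 := by
  set P := eliminationPoly T₁ T₂
  have hsub : {t : ℝ | T₁.assoc t = T₂.assoc t} ⊆ ↑P.roots.toFinset := by
    intro t ht
    simp only [Multiset.mem_toFinset, Finset.coe_sort_coe, Finset.mem_coe,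
      mem_roots hP, IsRoot.def]
    exact root_of_eq T₁ T₂ ht
  have hfin := Set.Finite.subset (P.roots.toFinset : Finset ℝ).finite_toSet hsub
  refine ⟨hfin, ?_⟩
  calc {t : ℝ | T₁.assoc t = T₂.assoc t}.ncard
      ≤ (↑P.roots.toFinset : Set ℝ).ncard := Set.ncard_le_ncard hsub (P.roots.toFinset).finite_toSet
    _ = P.roots.toFinset.card := Set.ncard_coe_finset _
    _ ≤ Multiset.card P.roots := Multiset.toFinset_card_le _
    _ ≤ P.natDegree := P.card_roots' 
    _ ≤ 16 * β + 8 := elim_natDegree T₁ T₂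
end
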